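/- Let ε = ±1 and let ∇ be the Type B connection with C₂₂¹ = ε, C₁₂¹ = 0, C₂₂² = 2εC₁₁², C₁₁¹ = 1 + 2C₁₂² + ε(C₁₁²)², and set α = C₁₁¹ − C₁₂² − 1. Then f(x¹,x²) = (x¹)^α satisfies H(f) = −f ρ_s. -/

import Mathlib

/-!
Both sides depend on x¹ alone and are homogeneous of degree α − 2: for f = (x¹)^α one has
H(f)_{ij} = α((α − 1)δ_{i1}δ_{j1} − C_{ij}¹)(x¹)^{α−2}, while ρ = ρ(C)/(x¹)² with ρ(C) quadratic
in the constants. So the claim is an identity between constants, and under the constraints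
ρ(C)₁₁ = (C₁₂² + 2)α, ρ(C)₂₂ = εα and ρ(C)₁₂ = −ρ(C)₂₁ = εC₁₁², against the Hessian
coefficients α(α − 1 − C₁₁¹) = −(C₁₂² + 2)α, −εα and 0.
-/
open Real

/-- Partial derivative ∂_i on ℝ². -/
noncomputable def pd (i : Fin 2) (f : ℝ × ℝ → ℝ) : ℝ × ℝ → ℝ :=
  fun p => if i = 0 then deriv (fun t => f (t, p.2)) p.1
           else deriv (fun t => f (p.1, t)) p.2

/-- Affine Hessian H(f)_{ij} = ∂_i∂_j f − Σ_k Γ_{ij}^k ∂_k f. -/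
noncomputable def Hess (Γ : Fin 2 → Fin 2 → Fin 2 → (ℝ × ℝ → ℝ))
    (f : ℝ × ℝ → ℝ) (i j : Fin 2) : ℝ × ℝ → ℝ :=
  fun p => pd i (pd j f) p - ∑ k, Γ i j k p * pd k f p

/-- Ricci tensor ρ_{jk} = ∂_i Γ_{jk}^i − ∂_j Γ_{ik}^i + Γ_{il}^i Γ_{jk}^l − Γ_{jl}^i Γ_{ik}^l. -/
noncomputable def Ric (Γ : Fin 2 → Fin 2 → Fin 2 → (ℝ × ℝ → ℝ)) (j k : Fin 2) :
    ℝ × ℝ → ℝ :=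
  fun p => (∑ i, pd i (Γ j k i) p) - (∑ i, pd j (Γ i k i) p)
    + (∑ i, ∑ l, Γ i l i p * Γ j k l p) - (∑ i, ∑ l, Γ j l i p * Γ i k l p)

/-- Symmetrized Ricci tensor. -/
noncomputable def RicS (Γ : Fin 2 → Fin 2 → Fin 2 → (ℝ × ℝ → ℝ)) (i j : Fin 2) :
    ℝ × ℝ → ℝ :=
  fun p => (Ric Γ i j p + Ric Γ j i p) / 2

/-- Covariant derivative of the Ricci tensor: (∇ρ)(i,j;k). -/
noncomputable def nabRic (Γ : Fin 2 → Fin 2 → Fin 2 → (ℝ × ℝ → ℝ)) (i j k : Fin 2) :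
    ℝ × ℝ → ℝ :=
  fun p => pd k (Ric Γ i j) p - ∑ l, Γ k i l p * Ric Γ l j p
    - ∑ l, Γ k j l p * Ric Γ i l p

/-- Type B Christoffel symbols Γ_{ij}^k = C_{ij}^k / x¹. -/
noncomputable def ΓB (C : Fin 2 → Fin 2 → Fin 2 → ℝ) :
    Fin 2 → Fin 2 → Fin 2 → (ℝ × ℝ → ℝ) :=
  fun i j k p => C i j k / p.1

lemma pd_const (i : Fin 2) (c : ℝ) : pd i (fun _ => c) = fun _ => 0 := by
  funext q
  fin_cases i <;> simp [pd]

lemma pd_zero_comp_fst (g : ℝ → ℝ) :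
    pd 0 (fun q : ℝ × ℝ => g q.1) = fun q => deriv g q.1 := by
  funext q
  simp [pd]

lemma pd_one_comp_fst (g : ℝ → ℝ) : pd 1 (fun q : ℝ × ℝ => g q.1) = fun _ => 0 := by
  funext q
  simp [pd]

lemma hess_comp_fst (Γ : Fin 2 → Fin 2 → Fin 2 → (ℝ × ℝ → ℝ)) (g : ℝ → ℝ)
    (i j : Fin 2) (p : ℝ × ℝ) :
    Hess Γ (fun q => g q.1) i j p
      = (if i = 0 ∧ j = 0 then deriv (deriv g) p.1 else 0) - Γ i j 0 p * deriv g p.1 := by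
  fin_cases i <;> fin_cases j <;>
    simp [Hess, Fin.sum_univ_two, pd_zero_comp_fst, pd_one_comp_fst, pd_const]

lemma hess_typeB_rpow_fst (C : Fin 2 → Fin 2 → Fin 2 → ℝ) (α : ℝ) (i j : Fin 2)
    {p : ℝ × ℝ} (hp : 0 < p.1) :
    Hess (ΓB C) (fun q => q.1 ^ α) i j p
      = α * ((if i = 0 ∧ j = 0 then α - 1 else 0) - C i j 0) * p.1 ^ (α - 2) := by
  have hpow : p.1 ^ (α - 1) = p.1 ^ (α - 2) * p.1 := by
    rw [← Real.rpow_add_one hp.ne']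
    ring_nf
  rw [hess_comp_fst (ΓB C) (fun t => t ^ α), Real.deriv_rpow_const',
    deriv_const_mul_field', Real.deriv_rpow_const']
  simp only [ΓB, sub_sub, one_add_one_eq_two, hpow]
  split_ifs
  · field_simp
  · field_simp
    ring

def typeBRic (C : Fin 2 → Fin 2 → Fin 2 → ℝ) (j k : Fin 2) : ℝ :=
  -C j k 0 + (if j = 0 then ∑ i, C i k i else 0)
    + ∑ i, ∑ l, C i l i * C j k l - ∑ i, ∑ l, C j l i * C i k l

lemma pd_typeB (C : Fin 2 → Fin 2 → Fin 2 → ℝ) (i j k l : Fin 2) (p : ℝ × ℝ) :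
    pd l (ΓB C i j k) p = if l = 0 then -C i j k / p.1 ^ 2 else 0 := by
  fin_cases l <;> simp [ΓB, pd]

lemma ric_typeB (C : Fin 2 → Fin 2 → Fin 2 → ℝ) (j k : Fin 2) (p : ℝ × ℝ) :
    Ric (ΓB C) j k p = typeBRic C j k / p.1 ^ 2 := by
  simp only [Ric, typeBRic, pd_typeB, ΓB]
  fin_cases j <;>
    simp only [Fin.sum_univ_two, Fin.zero_eta, Fin.mk_one, Fin.isValue, one_ne_zero, ↓reduceIte] <;>
    ring

lemma typeBRic_add_swap (C : Fin 2 → Fin 2 → Fin 2 → ℝ) (hsym : ∀ i j k, C i j k = C j i k)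
    (ε : ℝ) (h1 : C 1 1 0 = ε) (h2 : C 0 1 0 = 0) (h3 : C 1 1 1 = 2 * ε * C 0 0 1)
    (h4 : C 0 0 0 = 1 + 2 * C 0 1 1 + ε * (C 0 0 1) ^ 2) (i j : Fin 2) :
    typeBRic C i j + typeBRic C j i
      = -2 * (C 0 0 0 - C 0 1 1 - 1)
          * ((if i = 0 ∧ j = 0 then C 0 0 0 - C 0 1 1 - 1 - 1 else 0) - C i j 0) := by
  have h10 : C 1 0 = C 0 1 := funext (hsym 1 0)
  fin_cases i <;> fin_cases j <;>
    simp only [typeBRic, Fin.sum_univ_two, Fin.zero_eta, Fin.mk_one, Fin.isValue, one_ne_zero,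
      ↓reduceIte, and_self, and_true, and_false, h10, h1, h2, h3, h4] <;>
    ring

theorem typeB_eigenvalue_neg_one_case2_general
    (C : Fin 2 → Fin 2 → Fin 2 → ℝ)
    (hsym : ∀ i j k, C i j k = C j i k)
    (ε : ℝ)
    (h1 : C 1 1 0 = ε) (h2 : C 0 1 0 = 0)
    (h3 : C 1 1 1 = 2 * ε * C 0 0 1)
    (h4 : C 0 0 0 = 1 + 2 * C 0 1 1 + ε * (C 0 0 1) ^ 2) :
    ∀ i j : Fin 2, ∀ p : ℝ × ℝ, 0 < p.1 →
      Hess (ΓB C) (fun q => q.1 ^ (C 0 0 0 - C 0 1 1 - 1)) i j p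
        = - (p.1 ^ (C 0 0 0 - C 0 1 1 - 1)) * RicS (ΓB C) i j p := by
  intro i j p hp
  have hpow : p.1 ^ (C 0 0 0 - C 0 1 1 - 1 - 2) = p.1 ^ (C 0 0 0 - C 0 1 1 - 1) / p.1 ^ 2 := by
    rw [Real.rpow_sub hp, Real.rpow_two]
  rw [hess_typeB_rpow_fst C _ i j hp, RicS, ric_typeB, ric_typeB, ← add_div,
    typeBRic_add_swap C hsym ε h1 h2 h3 h4, hpow]
  ring

/-- Type B with C₂₂¹ = ε, C₁₂¹ = 0, C₂₂² = 2εC₁₁², C₁₁¹ = 1 + 2C₁₂² + ε(C₁₁²)²: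
f = (x¹)^α with α = C₁₁¹ − C₁₂² − 1 lies in E(−1,∇). -/
theorem typeB_eigenvalue_neg_one_case2
    (C : Fin 2 → Fin 2 → Fin 2 → ℝ)
    (hsym : ∀ i j k, C i j k = C j i k)
    (ε : ℝ) (hε : ε = 1 ∨ ε = -1)
    (h1 : C 1 1 0 = ε) (h2 : C 0 1 0 = 0)
    (h3 : C 1 1 1 = 2 * ε * C 0 0 1)
    (h4 : C 0 0 0 = 1 + 2 * C 0 1 1 + ε * (C 0 0 1) ^ 2) :
    ∀ i j : Fin 2, ∀ p : ℝ × ℝ, 0 < p.1 →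
      Hess (ΓB C) (fun q => q.1 ^ (C 0 0 0 - C 0 1 1 - 1)) i j p
        = - (p.1 ^ (C 0 0 0 - C 0 1 1 - 1)) * RicS (ΓB C) i j p :=
  typeB_eigenvalue_neg_one_case2_general C hsym ε h1 h2 h3 h4
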